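/- Let P(y) = Σ_{0≤h≤p} γ_h y^h ∈ R[y] with p ≥ 1 and γ_p ≠ 0, R real closed. Let θ₁, θ₂ ∈ R with extended sign vectors η₁ = (sign P^{(k)}(θ₁))_{0≤k≤p}, η₂ = (sign P^{(k)}(θ₂))_{0≤k≤p} (with η_i(p) = sign γ_p). Suppose η₁ ≠ η₂, and let q be the largest k with η₁(q) ≠ η₂(q). If either (η₁(q) < η₂(q) and η₁(q+1) = 1) or (η₁(q) > η₂(q) and η₁(q+1) = −1), then θ₁ < θ₂. -/
import Mathlib


/-- The sign of a real number as an integer. -/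
noncomputable def sgn (a : ℝ) : ℤ := if a < 0 then -1 else if a = 0 then 0 else 1

lemma sgn_neg' {a : ℝ} (h : a < 0) : sgn a = -1 := by unfold sgn; rw [if_pos h]

lemma sgn_zero' {a : ℝ} (h : a = 0) : sgn a = 0 := by
  unfold sgn; rw [if_neg (by simp [h]), if_pos h]

lemma sgn_pos' {a : ℝ} (h : 0 < a) : sgn a = 1 := by
  unfold sgn; rw [if_neg (by linarith), if_neg (by linarith)]

lemma sgn_mono {a b : ℝ} (h : a ≤ b) : sgn a ≤ sgn b := by
  rcases lt_trichotomy b 0 with h2 | h2 | h2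
  · rw [sgn_neg' h2, sgn_neg' (lt_of_le_of_lt h h2)]
  · rw [sgn_zero' h2]
    rcases lt_or_eq_of_le (h.trans_eq h2) with h1 | h1
    · rw [sgn_neg' h1]; omega
    · rw [sgn_zero' h1]
  · rcases lt_trichotomy a 0 with h1 | h1 | h1
    · rw [sgn_neg' h1, sgn_pos' h2]; omega
    · rw [sgn_zero' h1, sgn_pos' h2]; omega
    · rw [sgn_pos' h1, sgn_pos' h2]

lemma sgn_nonneg_iff {a : ℝ} : 0 ≤ sgn a ↔ 0 ≤ a := by
  rcases lt_trichotomy a 0 with h | h | h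
  · rw [sgn_neg' h]; constructor <;> intro h' <;> [omega; linarith]
  · rw [sgn_zero' h]; simp [h]
  · rw [sgn_pos' h]; constructor <;> intro h' <;> [linarith; omega]

lemma sgn_nonpos_iff {a : ℝ} : sgn a ≤ 0 ↔ a ≤ 0 := by
  rcases lt_trichotomy a 0 with h | h | h
  · rw [sgn_neg' h]; constructor <;> intro h' <;> [linarith; omega]
  · rw [sgn_zero' h]; simp [h]
  · rw [sgn_pos' h]; constructor <;> intro h' <;> [omega; linarith]

lemma sgn_eq_one_iff {a : ℝ} : sgn a = 1 ↔ 0 < a := by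
  rcases lt_trichotomy a 0 with h | h | h
  · rw [sgn_neg' h]; constructor <;> intro h' <;> [omega; linarith]
  · rw [sgn_zero' h]; constructor <;> intro h' <;> [omega; linarith [h]]
  · rw [sgn_pos' h]; simp [h]

lemma sgn_eq_neg_one_iff {a : ℝ} : sgn a = -1 ↔ a < 0 := by
  rcases lt_trichotomy a 0 with h | h | h
  · rw [sgn_neg' h]; simp [h]
  · rw [sgn_zero' h]; constructor <;> intro h' <;> [omega; linarith [h]]
  · rw [sgn_pos' h]; constructor <;> intro h' <;> [omega; linarith]

lemma sgn_level_ordConnected (c : ℤ) : Set.OrdConnected {y : ℝ | sgn y = c} := by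
  constructor
  rintro x hx y hy z hz
  have h1 := sgn_mono hz.1
  have h2 := sgn_mono hz.2
  simp only [Set.mem_setOf_eq] at *
  omega

lemma poly_monoOn {S : Set ℝ} (hS : S.OrdConnected) (f : Polynomial ℝ)
    (h : ∀ x ∈ S, 0 ≤ (Polynomial.derivative f).eval x) :
    MonotoneOn (fun x => f.eval x) S := by
  intro x hx y hy hxy
  have hIcc : Set.Icc x y ⊆ S := hS.out hx hy
  have := monotoneOn_of_deriv_nonneg (convex_Icc x y)
    ((f.continuous).continuousOn)
    ((f.differentiable).differentiableOn)
    (fun z hz => by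
      rw [Polynomial.deriv]
      exact h z (hIcc (interior_subset hz)))
  exact this (Set.left_mem_Icc.mpr hxy) (Set.right_mem_Icc.mpr hxy) hxy

lemma poly_antiOn {S : Set ℝ} (hS : S.OrdConnected) (f : Polynomial ℝ)
    (h : ∀ x ∈ S, (Polynomial.derivative f).eval x ≤ 0) :
    AntitoneOn (fun x => f.eval x) S := by
  intro x hx y hy hxy
  have hIcc : Set.Icc x y ⊆ S := hS.out hx hy
  have := antitoneOn_of_deriv_nonpos (convex_Icc x y)
    ((f.continuous).continuousOn)
    ((f.differentiable).differentiableOn)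
    (fun z hz => by
      rw [Polynomial.deriv]
      exact h z (hIcc (interior_subset hz)))
  exact this (Set.left_mem_Icc.mpr hxy) (Set.right_mem_Icc.mpr hxy) hxy

lemma poly_strictMonoOn {S : Set ℝ} (hS : S.OrdConnected) (f : Polynomial ℝ)
    (h : ∀ x ∈ S, 0 < (Polynomial.derivative f).eval x) :
    StrictMonoOn (fun x => f.eval x) S := by
  intro x hx y hy hxy
  have hIcc : Set.Icc x y ⊆ S := hS.out hx hy
  have := strictMonoOn_of_deriv_pos (convex_Icc x y)
    ((f.continuous).continuousOn)
    (fun z hz => by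
      rw [Polynomial.deriv]
      exact h z (hIcc (interior_subset hz)))
  exact this (Set.left_mem_Icc.mpr hxy.le) (Set.right_mem_Icc.mpr hxy.le) hxy

lemma poly_strictAntiOn {S : Set ℝ} (hS : S.OrdConnected) (f : Polynomial ℝ)
    (h : ∀ x ∈ S, (Polynomial.derivative f).eval x < 0) :
    StrictAntiOn (fun x => f.eval x) S := by
  intro x hx y hy hxy
  have hIcc : Set.Icc x y ⊆ S := hS.out hx hy
  have := strictAntiOn_of_deriv_neg (convex_Icc x y)
    ((f.continuous).continuousOn)
    (fun z hz => by
      rw [Polynomial.deriv]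
      exact h z (hIcc (interior_subset hz)))
  exact this (Set.left_mem_Icc.mpr hxy.le) (Set.right_mem_Icc.mpr hxy.le) hxy

lemma ordconn_inter_mono {S : Set ℝ} (hS : S.OrdConnected) {f : ℝ → ℝ}
    (hf : MonotoneOn f S) {C : Set ℝ} (hC : C.OrdConnected) :
    (S ∩ f ⁻¹' C).OrdConnected := by
  constructor
  rintro x ⟨hxS, hxC⟩ y ⟨hyS, hyC⟩ z hz
  have hzS : z ∈ S := hS.out hxS hyS hz
  exact ⟨hzS, hC.out hxC hyC ⟨hf hxS hzS hz.1, hf hzS hyS hz.2⟩⟩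

lemma ordconn_inter_anti {S : Set ℝ} (hS : S.OrdConnected) {f : ℝ → ℝ}
    (hf : AntitoneOn f S) {C : Set ℝ} (hC : C.OrdConnected) :
    (S ∩ f ⁻¹' C).OrdConnected := by
  constructor
  rintro x ⟨hxS, hxC⟩ y ⟨hyS, hyC⟩ z hz
  have hzS : z ∈ S := hS.out hxS hyS hz
  exact ⟨hzS, hC.out hyC hxC ⟨hf hzS hyS hz.2, hf hxS hzS hz.1⟩⟩

/-- Thom encoding ordering (Proposition 2.3): let `P` have degree `p ≥ 1`, and let `θ₁, θ₂` have
extended sign vectors `ηᵢ k = sign P^{(k)}(θᵢ)`, `0 ≤ k ≤ p`. If `q` is the largest index where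
`η₁` and `η₂` differ, and either (`η₁ q < η₂ q` and `η₁ (q+1) = 1`) or
(`η₁ q > η₂ q` and `η₁ (q+1) = -1`), then `θ₁ < θ₂`. -/
theorem thom_encoding_order (P : Polynomial ℝ) (p : ℕ) (hdeg : P.natDegree = p) (hp : 1 ≤ p)
    (θ₁ θ₂ : ℝ) (η₁ η₂ : ℕ → ℤ)
    (hη₁ : ∀ k ≤ p, η₁ k = sgn ((Polynomial.derivative^[k] P).eval θ₁))
    (hη₂ : ∀ k ≤ p, η₂ k = sgn ((Polynomial.derivative^[k] P).eval θ₂))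
    (q : ℕ) (hqp : q ≤ p) (hq : η₁ q ≠ η₂ q)
    (hmax : ∀ k, q < k → k ≤ p → η₁ k = η₂ k)
    (hcond : (η₁ q < η₂ q ∧ η₁ (q + 1) = 1) ∨ (η₂ q < η₁ q ∧ η₁ (q + 1) = -1)) :
    θ₁ < θ₂ := by
  classical
  -- the top derivative is a constant polynomial, so η₁ p = η₂ p, hence q < p
  have htop : η₁ p = η₂ p := by
    have h0 : (Polynomial.derivative^[p] P).natDegree = 0 := by
      have := Polynomial.natDegree_iterate_derivative P p
      omega
    obtain ⟨a, ha⟩ := Polynomial.natDegree_eq_zero.mp h0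
    rw [hη₁ p le_rfl, hη₂ p le_rfl, ← ha, Polynomial.eval_C, Polynomial.eval_C]
  have hqlt : q < p := by
    rcases lt_or_eq_of_le hqp with h | h
    · exact h
    · exact absurd (h ▸ htop) hq
  -- the sets T j
  set T : ℕ → Set ℝ := fun j =>
    {x | ∀ k, j ≤ k → k ≤ p → sgn ((Polynomial.derivative^[k] P).eval x) = η₂ k} with hT
  have key : ∀ m j, j + m = p + 1 → (T j).OrdConnected := by
    intro m
    induction m with
    | zero =>
      intro j hj
      have : T j = Set.univ := by
        ext x
        simp only [hT, Set.mem_setOf_eq, Set.mem_univ, iff_true]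
        intro k hk hk'
        omega
      rw [this]; exact Set.ordConnected_univ
    | succ m ih =>
      intro j hj
      have hjp : j ≤ p := by omega
      have hTj1 : (T (j + 1)).OrdConnected := ih (j + 1) (by omega)
      have hsplit : T j = T (j + 1) ∩
          (fun x => (Polynomial.derivative^[j] P).eval x) ⁻¹' {y | sgn y = η₂ j} := by
        ext x
        simp only [hT, Set.mem_setOf_eq, Set.mem_inter_iff, Set.mem_preimage]
        constructor
        · intro h
          exact ⟨fun k hk hk' => h k (by omega) hk', h j le_rfl hjp⟩
        · rintro ⟨h1, h2⟩ k hk hk'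
          rcases eq_or_lt_of_le hk with rfl | hlt
          · exact h2
          · exact h1 k hlt hk'
      rw [hsplit]
      -- the derivative of derivative^[j] P is derivative^[j+1] P
      have hder : Polynomial.derivative (Polynomial.derivative^[j] P)
          = Polynomial.derivative^[j + 1] P := (Function.iterate_succ_apply' _ j P).symm
      have hmonoanti : (∀ x ∈ T (j + 1),
            0 ≤ (Polynomial.derivative (Polynomial.derivative^[j] P)).eval x) ∨
          (∀ x ∈ T (j + 1),
            (Polynomial.derivative (Polynomial.derivative^[j] P)).eval x ≤ 0) := by
        by_cases hjp1 : j + 1 ≤ p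
        · rcases le_or_gt 0 (η₂ (j + 1)) with hle | hlt
          · left
            intro x hx
            have := hx (j + 1) le_rfl hjp1
            rw [hder]
            rw [← sgn_nonneg_iff]
            omega
          · right
            intro x hx
            have := hx (j + 1) le_rfl hjp1
            rw [hder]
            rw [← sgn_nonpos_iff]
            omega
        · left
          intro x hx
          rw [hder, Polynomial.iterate_derivative_eq_zero (by omega)]
          simp
      rcases hmonoanti with hmono | hanti
      · exact ordconn_inter_mono hTj1 (poly_monoOn hTj1 _ hmono) (sgn_level_ordConnected _)
      · exact ordconn_inter_anti hTj1 (poly_antiOn hTj1 _ hanti) (sgn_level_ordConnected _)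
  have hTconn : (T (q + 1)).OrdConnected := key (p - q) (q + 1) (by omega)
  -- both points belong to T (q+1)
  have hθ₂T : θ₂ ∈ T (q + 1) := by
    intro k hk hk'
    exact (hη₂ k hk').symm
  have hθ₁T : θ₁ ∈ T (q + 1) := by
    intro k hk hk'
    rw [← hη₁ k hk']
    exact hmax k (by omega) hk'
  have hq1p : q + 1 ≤ p := hqlt
  have hηq1 : η₁ (q + 1) = η₂ (q + 1) := hmax (q + 1) (by omega) hq1p
  have hθne : θ₁ ≠ θ₂ := by
    rintro rfl
    exact hq ((hη₁ q hqp).trans (hη₂ q hqp).symm)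
  have hder : Polynomial.derivative (Polynomial.derivative^[q] P)
      = Polynomial.derivative^[q + 1] P := (Function.iterate_succ_apply' _ q P).symm
  rcases hcond with ⟨hlt, hone⟩ | ⟨hlt, hone⟩
  · -- derivative positive on T (q+1): strictly increasing
    have hpos : ∀ x ∈ T (q + 1),
        0 < (Polynomial.derivative (Polynomial.derivative^[q] P)).eval x := by
      intro x hx
      have := hx (q + 1) le_rfl hq1p
      rw [hder, ← sgn_eq_one_iff]
      omega
    have hsm := poly_strictMonoOn hTconn _ hpos
    by_contra hcon
    have hlt' : θ₂ < θ₁ := lt_of_le_of_ne (not_lt.mp hcon) (Ne.symm hθne)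
    have := hsm hθ₂T hθ₁T hlt'
    have hs := sgn_mono this.le
    rw [← hη₂ q hqp, ← hη₁ q hqp] at hs
    omega
  · -- derivative negative on T (q+1): strictly decreasing
    have hneg : ∀ x ∈ T (q + 1),
        (Polynomial.derivative (Polynomial.derivative^[q] P)).eval x < 0 := by
      intro x hx
      have := hx (q + 1) le_rfl hq1p
      rw [hder, ← sgn_eq_neg_one_iff]
      omega
    have hsa := poly_strictAntiOn hTconn _ hneg
    by_contra hcon
    have hlt' : θ₂ < θ₁ := lt_of_le_of_ne (not_lt.mp hcon) (Ne.symm hθne)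
    have := hsa hθ₂T hθ₁T hlt'
    have hs := sgn_mono this.le
    rw [← hη₂ q hqp, ← hη₁ q hqp] at hs
    omega
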